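/- Let m ≥ 1 and let X₁, …, X_m be elements of a commutative ring. Let A be the 2m×2m matrix whose i-th row (for 1 ≤ i ≤ m) is (Xᵢ², Xᵢ³, …, Xᵢ^{2m+1}) and whose (m+i)-th row (for 1 ≤ i ≤ m) is (2Xᵢ, 3Xᵢ², …, (2m+1)Xᵢ^{2m}). Then det A = (−1)^{m(m−1)/2} · (∏_{i=1}^m Xᵢ⁴) · ∏_{1 ≤ i < j ≤ m} (X_j − Xᵢ)⁴. -/

import Mathlib

/-!
Replace the second copy of `X` by independent indeterminates `Y`, and the derivative rows by the
divided differences `(Y_a ^ n - X_a ^ n) / (Y_a - X_a)`, which become `n X_a ^ (n - 1)` at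
`Y = X`. Multiplying these rows by `Y_a - X_a` and subtracting the upper block leaves the rows of
the `2m × 2m` Vandermonde matrix in `(X, Y)`, scaled by `X_a ^ 2 Y_a ^ 2`. Its determinant
contains the factor `∏ a, (Y_a - X_a)`, which is cancelled in `ℤ[X, Y]` before specialising
`Y = X`; there every pair `a < b` contributes `(X_b - X_a) ^ 2` from the two small Vandermonde
determinants and `(X_b - X_a) (X_a - X_b)` from the mixed factor.
-/

open Finset Matrix

namespace Matrix

section PowerRows

variable {ι κ S : Type*} [CommRing S]

def powerRows (e : κ → ℕ) (x : ι → S) : Matrix ι κ S := of fun a j => x a ^ e j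

/-- Row `a` is the divided difference `(y a ^ e j - x a ^ e j) / (y a - x a)`, written as a
polynomial in `x a` and `y a`. -/
def dividedPowerRows (e : κ → ℕ) (x y : ι → S) : Matrix ι κ S :=
  of fun a j => ∑ k ∈ range (e j), y a ^ k * x a ^ (e j - 1 - k)

theorem diagonal_sub_mul_dividedPowerRows [Fintype ι] [DecidableEq ι] (e : κ → ℕ)
    (x y : ι → S) :
    diagonal (y - x) * dividedPowerRows e x y = powerRows e y - powerRows e x := by
  ext a j
  simp only [diagonal_mul, Pi.sub_apply, dividedPowerRows, powerRows, of_apply, Matrix.sub_apply]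
  rw [mul_comm, geom_sum₂_mul]

theorem dividedPowerRows_self (e : κ → ℕ) (x : ι → S) :
    dividedPowerRows e x x = of fun a j => (e j : S) * x a ^ (e j - 1) := by
  ext a j
  simp [dividedPowerRows, geom_sum₂_self]

variable {T : Type*} [CommRing T]

theorem powerRows_map (e : κ → ℕ) (x : ι → S) (f : S →+* T) :
    (powerRows e x).map f = powerRows e (f ∘ x) := by
  ext a j
  simp [powerRows]

theorem dividedPowerRows_map (e : κ → ℕ) (x y : ι → S) (f : S →+* T) :
    (dividedPowerRows e x y).map f = dividedPowerRows e (f ∘ x) (f ∘ y) := by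
  ext a j
  simp [dividedPowerRows]

end PowerRows

section FromRows

variable {ι S : Type*} [Fintype ι] [DecidableEq ι] [CommRing S]

theorem det_fromRows_add_mul_self (A B : Matrix ι (ι ⊕ ι) S) (C : Matrix ι ι S) :
    det (fromRows A (B + C * A)) = det (fromRows A B) := by
  have : fromRows A (B + C * A) = fromBlocks 1 0 C 1 * fromRows A B := by
    simp [fromBlocks_mul_fromRows, add_comm]
  rw [this, det_mul, det_fromBlocks_zero₁₂]
  simp

theorem det_fromRows_diagonal_mul (A B : Matrix ι (ι ⊕ ι) S) (d : ι → S) :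
    det (fromRows A (diagonal d * B)) = (∏ a, d a) * det (fromRows A B) := by
  have : fromRows A (diagonal d * B) = fromBlocks 1 0 0 (diagonal d) * fromRows A B := by
    simp [fromBlocks_mul_fromRows]
  rw [this, det_mul, det_fromBlocks_zero₁₂]
  simp

theorem prod_sub_mul_det_fromRows_dividedPowerRows (e : ι ⊕ ι → ℕ) (x y : ι → S) :
    (∏ a, (y a - x a)) * det (fromRows (powerRows e x) (dividedPowerRows e x y))
      = det (fromRows (powerRows e x) (powerRows e y)) := by
  rw [← det_fromRows_diagonal_mul, ← Pi.sub_def, diagonal_sub_mul_dividedPowerRows]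
  simpa [sub_eq_add_neg] using det_fromRows_add_mul_self (powerRows e x) (powerRows e y) (-1)

end FromRows

theorem det_vandermonde_append {R : Type*} [CommRing R] {m n : ℕ} (u : Fin m → R)
    (w : Fin n → R) :
    det (vandermonde (Fin.append u w))
      = det (vandermonde u) * det (vandermonde w) * ∏ i, ∏ j, (w j - u i) := by
  have hIoi : ∀ {k : ℕ} (i : Fin k) (f : Fin k → R),
      ∏ j ∈ Ioi i, f j = ∏ j, if i < j then f j else 1 := fun i f => by
    rw [← prod_filter]; congr 1; ext; simp
  simp only [det_vandermonde, hIoi, Fin.prod_univ_add, Fin.append_left, Fin.append_right,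
    Fin.lt_def, Fin.val_castAdd, Fin.val_natAdd]
  have h1 : ∀ (i : Fin m) (j : Fin n), (i : ℕ) < m + j := fun i j => by omega
  have h2 : ∀ (i : Fin n) (j : Fin m), ¬ m + (i : ℕ) < j := fun i j => by omega
  simp only [h1, h2, Nat.add_lt_add_iff_left, if_true, if_false, prod_const_one,
    prod_mul_distrib]
  ring

section ShiftedVandermonde

variable {S : Type*} [CommRing S] {m : ℕ}

theorem det_fromRows_powerRows_add (s : ℕ) (x y : Fin m → S) :
    det (fromRows (powerRows (fun j => (finSumFinEquiv j : ℕ) + s) x)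
        (powerRows (fun j => (finSumFinEquiv j : ℕ) + s) y))
      = (∏ a, x a ^ s * y a ^ s) * det (vandermonde (Fin.append x y)) := by
  have : fromRows (powerRows (fun j => (finSumFinEquiv j : ℕ) + s) x)
        (powerRows (fun j => (finSumFinEquiv j : ℕ) + s) y)
      = of fun i j => Sum.elim x y i ^ s *
          (vandermonde (Fin.append x y)).submatrix finSumFinEquiv finSumFinEquiv i j := by
    ext (a | a) j <;>
      simp [powerRows, vandermonde_apply, pow_add, mul_comm, -Fin.natAdd_eq_addNat]
  rw [this, det_mul_column, det_submatrix_equiv_self, Fintype.prod_sum_type, prod_mul_distrib]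
  rfl

theorem det_fromRows_dividedPowerRows_of_isLeftRegular (s : ℕ) {x y : Fin m → S}
    (hxy : IsLeftRegular (∏ a, (y a - x a))) :
    det (fromRows (powerRows (fun j => (finSumFinEquiv j : ℕ) + s) x)
        (dividedPowerRows (fun j => (finSumFinEquiv j : ℕ) + s) x y))
      = (∏ a, x a ^ s * y a ^ s) * (det (vandermonde x) * det (vandermonde y) *
          ∏ a, ∏ b ∈ univ.erase a, (y b - x a)) := by
  refine hxy ?_
  beta_reduce
  rw [prod_sub_mul_det_fromRows_dividedPowerRows, det_fromRows_powerRows_add,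
    det_vandermonde_append,
    ← prod_congr rfl fun a _ => mul_prod_erase univ (fun b => y b - x a) (mem_univ a)]
  simp only [prod_mul_distrib]
  ring

theorem det_fromRows_dividedPowerRows (s : ℕ) (x y : Fin m → S) :
    det (fromRows (powerRows (fun j => (finSumFinEquiv j : ℕ) + s) x)
        (dividedPowerRows (fun j => (finSumFinEquiv j : ℕ) + s) x y))
      = (∏ a, x a ^ s * y a ^ s) * (det (vandermonde x) * det (vandermonde y) *
          ∏ a, ∏ b ∈ univ.erase a, (y b - x a)) := by
  let X : Fin m ⊕ Fin m → MvPolynomial (Fin m ⊕ Fin m) ℤ := MvPolynomial.X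
  have generic := det_fromRows_dividedPowerRows_of_isLeftRegular s (x := X ∘ Sum.inl)
    (y := X ∘ Sum.inr) <| IsRegular.left <| .of_ne_zero <| prod_ne_zero_iff.2 fun a _ =>
      sub_ne_zero.2 (MvPolynomial.X_injective.ne Sum.inr_ne_inl)
  let φ := MvPolynomial.eval₂Hom (Int.castRingHom S) (Sum.elim x y)
  have hvand : ∀ v : Fin m → MvPolynomial (Fin m ⊕ Fin m) ℤ,
      φ (det (vandermonde v)) = det (vandermonde (φ ∘ v)) := fun v => by
    rw [RingHom.map_det]; congr 1; ext; simp [vandermonde_apply]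
  have h := congrArg φ generic
  simp only [RingHom.map_det, RingHom.mapMatrix_apply, fromRows_map, powerRows_map,
    dividedPowerRows_map, map_mul, map_prod, map_pow, map_sub, hvand] at h
  simpa [φ, X, Function.comp_def] using h

end ShiftedVandermonde

theorem prod_prod_erase_sub_eq_det_vandermonde_sq {R : Type*} [CommRing R] {m : ℕ}
    (x : Fin m → R) :
    ∏ a, ∏ b ∈ univ.erase a, (x b - x a)
      = (-1) ^ (m * (m - 1) / 2) * det (vandermonde x) ^ 2 := by
  have hpairs : ∑ i : Fin m, #(Ioi i) = m * (m - 1) / 2 := by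
    rw [← sum_range_id, ← sum_range_reflect, ← Fin.sum_univ_eq_sum_range]
    simp [Fin.card_Ioi]
  have hsq : ∀ u v : R, (u - v) * (v - u) = -1 * (u - v) ^ 2 := fun u v => by ring
  rw [det_vandermonde, ← prod_pow, ← hpairs, ← prod_pow_eq_pow_sum]
  simp_rw [← prod_pow, ← prod_const, ← prod_mul_distrib, ← hsq,
    prod_prod_Ioi_mul_eq_prod_prod_off_diag, compl_eq_univ_sdiff, sdiff_singleton_eq_erase]

end Matrix

theorem det_confluent_vandermonde_shifted {R : Type*} [CommRing R] (m : ℕ)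
    (X : Fin m → R) :
    Matrix.det (Matrix.of fun i j : Fin (2 * m) =>
      if h : (i : ℕ) < m then X ⟨i, h⟩ ^ ((j : ℕ) + 2)
      else (((j : ℕ) + 2 : ℕ) : R) * X ⟨(i : ℕ) - m, by have := i.isLt; omega⟩ ^ ((j : ℕ) + 1))
    = (-1) ^ (m * (m - 1) / 2) * (∏ i, X i ^ 4) *
        ∏ p ∈ Finset.univ.filter (fun p : Fin m × Fin m => p.1 < p.2),
          (X p.2 - X p.1) ^ 4 := by
  let E : Fin m ⊕ Fin m ≃ Fin (2 * m) := finSumFinEquiv.trans (finCongr (two_mul m).symm)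
  have hpairs : ∏ p ∈ univ.filter (fun p : Fin m × Fin m => p.1 < p.2), (X p.2 - X p.1) ^ 4
      = det (vandermonde X) ^ 4 := by
    simp_rw [det_vandermonde, ← prod_pow]
    exact prod_finset_product' (f := fun i j => (X j - X i) ^ 4) _ _ _ fun p => by simp
  rw [← det_submatrix_equiv_self E]
  convert_to det (fromRows (powerRows (fun j => (finSumFinEquiv j : ℕ) + 2) X)
      (dividedPowerRows (fun j => (finSumFinEquiv j : ℕ) + 2) X X)) = _ using 2
  · rw [dividedPowerRows_self]
    ext (a | a) j <;> simp [E, powerRows]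
  rw [det_fromRows_dividedPowerRows, prod_prod_erase_sub_eq_det_vandermonde_sq, hpairs]
  simp_rw [← pow_add]
  ring
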